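/- Define q_n = t_n − √2 and r_n = t_n + (17√2 − 2)/15 for all n ≥ 0. Then ∑_{n≥1} (17·q_{n-1} + 15·r_n)/n⁴ = 16·η(4), where η(s) = ∑_{n≥1} (−1)^{n−1}/n^s is the alternating zeta (Dirichlet eta) function. -/

import Mathlib

open Complex

/-- The Thue-Morse sequence: binary digit sum of `n` modulo 2. -/
def tm (n : ℕ) : ℕ := (Nat.digits 2 n).sum % 2

/-- The ±1 Thue-Morse sequence `ε n = (-1)^(t n)`. -/
noncomputable def eps (n : ℕ) : ℂ := (-1) ^ tm n

lemma tm_le_one (n : ℕ) : tm n ≤ 1 := Nat.lt_succ_iff.mp (Nat.mod_lt _ two_pos)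

lemma tm_two_mul (n : ℕ) : tm (2 * n) = tm n := by
  rcases Nat.eq_zero_or_pos n with h | h
  · simp [h]
  · unfold tm
    rw [Nat.digits_def' (by norm_num : 1 < 2) (by omega)]
    simp [Nat.mul_div_cancel_left _ two_pos, Nat.mul_mod_right]

lemma tm_two_mul_add_one (n : ℕ) : tm (2 * n + 1) = 1 - tm n := by
  unfold tm
  rw [Nat.digits_def' (by norm_num : 1 < 2) (by omega)]
  have h1 : (2 * n + 1) % 2 = 1 := by omega
  have h2 : (2 * n + 1) / 2 = n := by omega
  rw [h1, h2, List.sum_cons]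
  omega

lemma inj2 : Function.Injective (fun k : ℕ => 2 * k) := fun a b h => by
  dsimp only at h; omega

lemma inj2' : Function.Injective (fun k : ℕ => 2 * k + 1) := fun a b h => by
  dsimp only at h; omega

lemma den_even (k : ℕ) : ((2 : ℝ) * (k : ℝ) + 1) ^ 4 = (((2 * k : ℕ) : ℝ) + 1) ^ 4 := by
  push_cast; ring

lemma den_odd (k : ℕ) : (16 : ℝ) * ((k : ℝ) + 1) ^ 4 = (((2 * k + 1 : ℕ) : ℝ) + 1) ^ 4 := by
  push_cast; ring

lemma cast_tm_odd (k : ℕ) : ((tm (2 * k + 1) : ℝ)) = 1 - (tm k : ℝ) := by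
  rw [tm_two_mul_add_one, Nat.cast_sub (tm_le_one k), Nat.cast_one]

lemma sumP : Summable (fun n : ℕ => 1 / ((n : ℝ) + 1) ^ 4) := by
  have : Summable (fun n : ℕ => 1 / ((n : ℝ)) ^ 4) :=
    (Real.summable_one_div_nat_pow.mpr (by norm_num))
  have := (summable_nat_add_iff 1).mpr this
  convert this using 2 with n
  · rfl
  push_cast; ring

lemma sum_dom (c : ℕ → ℝ) (h0 : ∀ n, 0 ≤ c n) (h1 : ∀ n, c n ≤ 1) :
    Summable (fun n : ℕ => c n / ((n : ℝ) + 1) ^ 4) := by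
  refine Summable.of_nonneg_of_le (fun n => ?_) (fun n => ?_) sumP
  · exact div_nonneg (h0 n) (by positivity)
  · gcongr
    exact h1 n

noncomputable def zeta4 : ℝ := ∑' n : ℕ, 1 / ((n : ℝ) + 1) ^ 4
noncomputable def fS : ℝ := ∑' n : ℕ, (tm n : ℝ) / ((n : ℝ) + 1) ^ 4
noncomputable def gS : ℝ := ∑' n : ℕ, (tm (n + 1) : ℝ) / ((n : ℝ) + 1) ^ 4
noncomputable def lamS : ℝ := ∑' n : ℕ, 1 / (2 * (n : ℝ) + 1) ^ 4
noncomputable def hSS : ℝ := ∑' n : ℕ, (tm n : ℝ) / (2 * (n : ℝ) + 1) ^ 4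

lemma Sf : Summable (fun n : ℕ => (tm n : ℝ) / ((n : ℝ) + 1) ^ 4) :=
  sum_dom _ (fun n => by positivity) (fun n => by exact_mod_cast tm_le_one n)

lemma Sg : Summable (fun n : ℕ => (tm (n + 1) : ℝ) / ((n : ℝ) + 1) ^ 4) :=
  sum_dom _ (fun n => by positivity) (fun n => by exact_mod_cast tm_le_one (n + 1))

lemma Slam : Summable (fun k : ℕ => 1 / (2 * (k : ℝ) + 1) ^ 4) :=
  (sumP.comp_injective inj2).congr (fun k => by
    show (1 : ℝ) / (((2 * k : ℕ) : ℝ) + 1) ^ 4 = _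
    rw [← den_even])

lemma Sh : Summable (fun k : ℕ => (tm k : ℝ) / (2 * (k : ℝ) + 1) ^ 4) :=
  (Sf.comp_injective inj2).congr (fun k => by
    show ((tm (2 * k) : ℝ)) / (((2 * k : ℕ) : ℝ) + 1) ^ 4 = _
    rw [tm_two_mul, ← den_even])

lemma key_zeta : lamS + (1 / 16) * zeta4 = zeta4 := by
  have heven : lamS = ∑' k : ℕ, (1 : ℝ) / (((2 * k : ℕ) : ℝ) + 1) ^ 4 :=
    tsum_congr fun k => by rw [← den_even]
  have hodd : (1 / 16 : ℝ) * zeta4 = ∑' k : ℕ, (1 : ℝ) / (((2 * k + 1 : ℕ) : ℝ) + 1) ^ 4 := by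
    rw [zeta4]
    calc (1/16 : ℝ) * ∑' n : ℕ, 1 / ((n : ℝ) + 1) ^ 4
        = ∑' n : ℕ, (1/16 : ℝ) * (1 / ((n : ℝ) + 1) ^ 4) := tsum_mul_left.symm
      _ = ∑' k : ℕ, (1 : ℝ) / (((2 * k + 1 : ℕ) : ℝ) + 1) ^ 4 :=
          tsum_congr fun k => by rw [div_mul_div_comm, one_mul, den_odd]
  rw [heven, hodd, zeta4]
  exact tsum_even_add_odd (f := fun n : ℕ => 1 / ((n : ℝ) + 1) ^ 4)
    (sumP.comp_injective inj2) (sumP.comp_injective inj2')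

lemma key_f : hSS + ((1 / 16) * zeta4 - (1 / 16) * fS) = fS := by
  have heven : hSS = ∑' k : ℕ, ((tm (2 * k) : ℝ)) / (((2 * k : ℕ) : ℝ) + 1) ^ 4 :=
    tsum_congr fun k => by rw [tm_two_mul, ← den_even]
  have hodd : (1 / 16 : ℝ) * zeta4 - (1 / 16) * fS =
      ∑' k : ℕ, ((tm (2 * k + 1) : ℝ)) / (((2 * k + 1 : ℕ) : ℝ) + 1) ^ 4 := by
    rw [zeta4, fS]
    calc (1/16 : ℝ) * (∑' n : ℕ, 1 / ((n : ℝ) + 1) ^ 4)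
          - (1/16) * ∑' n : ℕ, (tm n : ℝ) / ((n : ℝ) + 1) ^ 4
        = (∑' n : ℕ, (1/16 : ℝ) * (1 / ((n : ℝ) + 1) ^ 4))
            - ∑' n : ℕ, (1/16 : ℝ) * ((tm n : ℝ) / ((n : ℝ) + 1) ^ 4) := by
          rw [tsum_mul_left, tsum_mul_left]
      _ = ∑' n : ℕ, ((1/16 : ℝ) * (1 / ((n : ℝ) + 1) ^ 4)
            - (1/16 : ℝ) * ((tm n : ℝ) / ((n : ℝ) + 1) ^ 4)) :=
          (Summable.tsum_sub (sumP.mul_left _) (Sf.mul_left _)).symm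
      _ = ∑' k : ℕ, ((tm (2 * k + 1) : ℝ)) / (((2 * k + 1 : ℕ) : ℝ) + 1) ^ 4 := by
          refine tsum_congr fun k => ?_
          rw [cast_tm_odd, ← den_odd]
          simp only [div_mul_div_comm, one_mul]
          rw [div_sub_div_same]
  rw [heven, hodd, fS]
  exact tsum_even_add_odd (f := fun n : ℕ => (tm n : ℝ) / ((n : ℝ) + 1) ^ 4)
    (Sf.comp_injective inj2) (Sf.comp_injective inj2')

lemma key_g : (lamS - hSS) + (1 / 16) * gS = gS := by
  have heven : lamS - hSS = ∑' k : ℕ, ((tm (2 * k + 1) : ℝ)) / (((2 * k : ℕ) : ℝ) + 1) ^ 4 := by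
    rw [lamS, hSS]
    calc (∑' n : ℕ, 1 / (2 * (n : ℝ) + 1) ^ 4) - ∑' n : ℕ, (tm n : ℝ) / (2 * (n : ℝ) + 1) ^ 4
        = ∑' n : ℕ, (1 / (2 * (n : ℝ) + 1) ^ 4 - (tm n : ℝ) / (2 * (n : ℝ) + 1) ^ 4) :=
          (Summable.tsum_sub Slam Sh).symm
      _ = ∑' k : ℕ, ((tm (2 * k + 1) : ℝ)) / (((2 * k : ℕ) : ℝ) + 1) ^ 4 := by
          refine tsum_congr fun k => ?_
          rw [cast_tm_odd, ← den_even, div_sub_div_same]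
  have hodd : (1 / 16 : ℝ) * gS =
      ∑' k : ℕ, ((tm (2 * k + 1 + 1) : ℝ)) / (((2 * k + 1 : ℕ) : ℝ) + 1) ^ 4 := by
    rw [gS]
    calc (1/16 : ℝ) * ∑' n : ℕ, (tm (n + 1) : ℝ) / ((n : ℝ) + 1) ^ 4
        = ∑' n : ℕ, (1/16 : ℝ) * ((tm (n + 1) : ℝ) / ((n : ℝ) + 1) ^ 4) := tsum_mul_left.symm
      _ = ∑' k : ℕ, ((tm (2 * k + 1 + 1) : ℝ)) / (((2 * k + 1 : ℕ) : ℝ) + 1) ^ 4 := by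
          refine tsum_congr fun k => ?_
          have h2 : 2 * k + 1 + 1 = 2 * (k + 1) := by ring
          rw [h2, tm_two_mul, div_mul_div_comm, one_mul, den_odd]
  rw [heven, hodd, gS]
  exact tsum_even_add_odd (f := fun n : ℕ => (tm (n + 1) : ℝ) / ((n : ℝ) + 1) ^ 4)
    (Sg.comp_injective inj2) (Sg.comp_injective inj2')

lemma key_eta : lamS - (1 / 16) * zeta4 = ∑' n : ℕ, (-1 : ℝ) ^ n / ((n : ℝ) + 1) ^ 4 := by
  have SE_even : Summable (fun k : ℕ => (-1 : ℝ) ^ (2 * k) / (((2 * k : ℕ) : ℝ) + 1) ^ 4) :=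
    Slam.congr fun k => by rw [den_even, pow_mul]; norm_num
  have SE_odd : Summable
      (fun k : ℕ => (-1 : ℝ) ^ (2 * k + 1) / (((2 * k + 1 : ℕ) : ℝ) + 1) ^ 4) :=
    ((sumP.mul_left (1/16)).neg).congr fun k => by
      have hp : (-1 : ℝ) ^ (2 * k + 1) = -1 := by rw [pow_succ, pow_mul]; norm_num
      rw [hp, div_mul_div_comm, one_mul, den_odd]
      norm_num [neg_div]
  have heven : lamS = ∑' k : ℕ, (-1 : ℝ) ^ (2 * k) / (((2 * k : ℕ) : ℝ) + 1) ^ 4 :=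
    tsum_congr fun k => by rw [den_even, pow_mul]; norm_num
  have hodd : -((1 / 16 : ℝ) * zeta4) =
      ∑' k : ℕ, (-1 : ℝ) ^ (2 * k + 1) / (((2 * k + 1 : ℕ) : ℝ) + 1) ^ 4 := by
    rw [zeta4]
    calc -((1/16 : ℝ) * ∑' n : ℕ, 1 / ((n : ℝ) + 1) ^ 4)
        = ∑' n : ℕ, -((1/16 : ℝ) * (1 / ((n : ℝ) + 1) ^ 4)) := by
          rw [tsum_neg, tsum_mul_left]
      _ = ∑' k : ℕ, (-1 : ℝ) ^ (2 * k + 1) / (((2 * k + 1 : ℕ) : ℝ) + 1) ^ 4 := by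
          refine tsum_congr fun k => ?_
          have hp : (-1 : ℝ) ^ (2 * k + 1) = -1 := by rw [pow_succ, pow_mul]; norm_num
          rw [hp, div_mul_div_comm, one_mul, den_odd]
          norm_num [neg_div]
  rw [sub_eq_add_neg, heven, hodd]
  exact tsum_even_add_odd (f := fun n : ℕ => (-1 : ℝ) ^ n / ((n : ℝ) + 1) ^ 4) SE_even SE_odd

theorem stmt_17 :
    ∑' n : ℕ, (17 * ((tm n : ℝ) - Real.sqrt 2) +
        15 * ((tm (n + 1) : ℝ) + (17 * Real.sqrt 2 - 2) / 15)) / ((n : ℝ) + 1) ^ 4 =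
      16 * ∑' n : ℕ, (-1 : ℝ) ^ n / ((n : ℝ) + 1) ^ 4 := by
  have step1 : ∑' n : ℕ, (17 * ((tm n : ℝ) - Real.sqrt 2) +
        15 * ((tm (n + 1) : ℝ) + (17 * Real.sqrt 2 - 2) / 15)) / ((n : ℝ) + 1) ^ 4 =
      ∑' n : ℕ, (17 * ((tm n : ℝ) / ((n : ℝ) + 1) ^ 4) +
        15 * ((tm (n + 1) : ℝ) / ((n : ℝ) + 1) ^ 4) - 2 * (1 / ((n : ℝ) + 1) ^ 4)) := by
    refine tsum_congr fun n => ?_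
    have hn : ((n : ℝ) + 1) ≠ 0 := by positivity
    field_simp
    ring
  have step2 : ∑' n : ℕ, (17 * ((tm n : ℝ) / ((n : ℝ) + 1) ^ 4) +
        15 * ((tm (n + 1) : ℝ) / ((n : ℝ) + 1) ^ 4) - 2 * (1 / ((n : ℝ) + 1) ^ 4)) =
      17 * fS + 15 * gS - 2 * zeta4 := by
    rw [Summable.tsum_sub ((Sf.mul_left 17).add (Sg.mul_left 15)) (sumP.mul_left 2),
      Summable.tsum_add (Sf.mul_left 17) (Sg.mul_left 15), tsum_mul_left, tsum_mul_left, tsum_mul_left,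
      zeta4, fS, gS]
  rw [step1, step2, ← key_eta]
  have h1 := key_zeta
  have h2 := key_f
  have h3 := key_g
  linarith
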